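/- arXiv:2506.09244 — 2 statements merged into one kernel-verified Lean document; each statement's English description precedes it below -/
import Mathlib

section
/- Let d ≥ 1 and let b : ℝ^d → ℝ^d be a locally integrable vector field such that for some δ < ∞ one has ∫_{ℝ^d} |b(y)| φ(y)² dy ≤ δ (∫_{ℝ^d} |∇φ|² dy)^{1/2} (∫_{ℝ^d} φ² dy)^{1/2} for every φ ∈ C_c^∞(ℝ^d). Then there exists a finite constant C, depending only on d and δ, such that ∫_{B_r(x)} |b(y)| dy ≤ C r^{d−1} for all r > 0 and x ∈ ℝ^d; that is, b belongs to the Morrey class M₁. -/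
/-!
Test the form-boundedness inequality against `φ y = ψ (r⁻¹ • (y - x))`, where `ψ` is a fixed
bump function equal to `1` on the unit ball. Since `φ = 1` on `B_r(x)`, the left-hand side
dominates `∫_{B_r(x)} |b|`, while scaling gives `∫ |∇φ|² = r^(d-2) ∫ |∇ψ|²` and
`∫ φ² = r^d ∫ ψ²`, so the right-hand side is `δ ‖∇ψ‖₂ ‖ψ‖₂ r^(d-1)`, with a constant
independent of `b`, `x` and `r`.
-/

open MeasureTheory Metric

section Rescaling

variable {E F : Type*} [NormedAddCommGroup E] [NormedSpace ℝ E]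

theorem hasFDerivAt_comp_inv_smul_sub {ψ : E → ℝ} (x y : E) (r : ℝ)
    (hψ : DifferentiableAt ℝ ψ (r⁻¹ • (y - x))) :
    HasFDerivAt (fun z ↦ ψ (r⁻¹ • (z - x))) (r⁻¹ • fderiv ℝ ψ (r⁻¹ • (y - x))) y := by
  have hlin : HasFDerivAt (fun z : E ↦ r⁻¹ • (z - x)) (r⁻¹ • ContinuousLinearMap.id ℝ E) y :=
    ((hasFDerivAt_id y).sub_const x).const_smul r⁻¹
  have hcomp := hψ.hasFDerivAt.comp y hlin
  rwa [ContinuousLinearMap.comp_smul, ContinuousLinearMap.comp_id] at hcomp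

theorem norm_fderiv_comp_inv_smul_sub {ψ : E → ℝ} (hψ : Differentiable ℝ ψ) (x y : E) (r : ℝ) :
    ‖fderiv ℝ (fun z ↦ ψ (r⁻¹ • (z - x))) y‖ = |r|⁻¹ * ‖fderiv ℝ ψ (r⁻¹ • (y - x))‖ := by
  rw [(hasFDerivAt_comp_inv_smul_sub x y r (hψ _)).fderiv, norm_smul, Real.norm_eq_abs, abs_inv]

variable [NormedAddCommGroup F] [NormedSpace ℝ F] [MeasurableSpace E] [BorelSpace E]
  [FiniteDimensional ℝ E] (μ : Measure E) [μ.IsAddHaarMeasure]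

theorem integral_comp_inv_smul_sub (f : E → F) (x : E) {r : ℝ} (hr : 0 ≤ r) :
    ∫ y, f (r⁻¹ • (y - x)) ∂μ = r ^ Module.finrank ℝ E • ∫ y, f y ∂μ := by
  rw [integral_sub_right_eq_self (fun y ↦ f (r⁻¹ • y)) x,
    Measure.integral_comp_inv_smul_of_nonneg μ f hr]

theorem integral_norm_fderiv_sq_comp_inv_smul_sub {ψ : E → ℝ} (hψ : Differentiable ℝ ψ) (x : E)
    {r : ℝ} (hr : 0 ≤ r) :
    ∫ y, ‖fderiv ℝ (fun z ↦ ψ (r⁻¹ • (z - x))) y‖ ^ 2 ∂μ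
      = r⁻¹ ^ 2 * (r ^ Module.finrank ℝ E * ∫ y, ‖fderiv ℝ ψ y‖ ^ 2 ∂μ) := by
  simp_rw [norm_fderiv_comp_inv_smul_sub hψ, abs_of_nonneg hr, mul_pow]
  rw [integral_const_mul, integral_comp_inv_smul_sub μ (fun y ↦ ‖fderiv ℝ ψ y‖ ^ 2) x hr,
    smul_eq_mul]

end Rescaling

theorem setIntegral_norm_le_integral_norm_mul_of_eqOn_one {X E : Type*} [TopologicalSpace X]
    [T2Space X] [MeasurableSpace X] [OpensMeasurableSpace X] [NormedAddCommGroup E]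
    {μ : Measure X} {f : X → E} {χ : X → ℝ} {s : Set X} (hf : LocallyIntegrable f μ)
    (hχ : Continuous χ) (hχc : HasCompactSupport χ) (hχ0 : 0 ≤ χ) (hs : MeasurableSet s)
    (hχs : Set.EqOn χ 1 s) :
    ∫ y in s, ‖f y‖ ∂μ ≤ ∫ y, ‖f y‖ * χ y ∂μ := by
  have hf' : LocallyIntegrable (‖f ·‖) μ :=
    locallyIntegrableOn_univ.mp (hf.locallyIntegrableOn Set.univ).norm
  calc ∫ y in s, ‖f y‖ ∂μ = ∫ y in s, ‖f y‖ * χ y ∂μ :=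
        setIntegral_congr_fun hs fun y hy ↦ by simp [hχs hy]
    _ ≤ ∫ y, ‖f y‖ * χ y ∂μ :=
        setIntegral_le_integral (hf'.integrable_smul_right_of_hasCompactSupport hχ hχc)
          (Filter.Eventually.of_forall fun y ↦ mul_nonneg (norm_nonneg _) (hχ0 y))

section FormBounded

variable {E F : Type*} [NormedAddCommGroup E] [NormedSpace ℝ E] [MeasurableSpace E]
  [NormedAddCommGroup F]

def MultiplicativelyFormBounded (μ : Measure E) (b : E → F) (δ : ℝ) : Prop :=
  ∀ φ : E → ℝ, ContDiff ℝ (⊤ : ℕ∞) φ → HasCompactSupport φ →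
    ∫ y, ‖b y‖ * φ y ^ 2 ∂μ ≤
      δ * (∫ y, ‖fderiv ℝ φ y‖ ^ 2 ∂μ) ^ (1/2 : ℝ) * (∫ y, φ y ^ 2 ∂μ) ^ (1/2 : ℝ)

variable [BorelSpace E] [FiniteDimensional ℝ E] {μ : Measure E} [μ.IsAddHaarMeasure]

theorem MultiplicativelyFormBounded.setIntegral_ball_le {b : E → F} {δ : ℝ}
    (hform : MultiplicativelyFormBounded μ b δ) (hb : LocallyIntegrable b μ) {ψ : E → ℝ}
    (hψ : ContDiff ℝ (⊤ : ℕ∞) ψ) (hψc : HasCompactSupport ψ) (hψ1 : Set.EqOn ψ 1 (ball 0 1))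
    (hE : 1 ≤ Module.finrank ℝ E) {r : ℝ} (hr : 0 < r) (x : E) :
    ∫ y in ball x r, ‖b y‖ ∂μ ≤
      δ * (∫ y, ‖fderiv ℝ ψ y‖ ^ 2 ∂μ) ^ (1/2 : ℝ) * (∫ y, ψ y ^ 2 ∂μ) ^ (1/2 : ℝ)
        * r ^ (Module.finrank ℝ E - 1) := by
  set d := Module.finrank ℝ E
  set φ : E → ℝ := fun y ↦ ψ (r⁻¹ • (y - x))
  have hφ : ContDiff ℝ (⊤ : ℕ∞) φ := hψ.comp ((contDiff_id.sub contDiff_const).const_smul r⁻¹)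
  have hφc : HasCompactSupport φ :=
    (hψc.comp_smul (inv_ne_zero hr.ne')).comp_homeomorph (Homeomorph.subRight x)
  have hφ1 : Set.EqOn (fun y ↦ φ y ^ 2) 1 (ball x r) := fun y hy ↦ by
    have hy' : r⁻¹ • (y - x) ∈ ball (0 : E) 1 := by
      rw [mem_ball_zero_iff, norm_smul, norm_inv, Real.norm_of_nonneg hr.le,
        inv_mul_lt_one₀ hr, ← dist_eq_norm]
      exact hy
    simp [φ, hψ1 hy']
  have hscale (A B : ℝ) :
      (r⁻¹ ^ 2 * (r ^ d * A)) ^ (1/2 : ℝ) * (r ^ d * B) ^ (1/2 : ℝ)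
        = A ^ (1/2 : ℝ) * B ^ (1/2 : ℝ) * r ^ (d - 1) := by
    simp only [← Real.sqrt_eq_rpow]
    rw [Real.sqrt_mul (by positivity), Real.sqrt_sq (by positivity), Real.sqrt_mul (by positivity),
      Real.sqrt_mul (by positivity), pow_sub₀ r hr.ne' hE, pow_one]
    linear_combination r⁻¹ * √A * √B * Real.mul_self_sqrt (pow_nonneg hr.le d)
  calc ∫ y in ball x r, ‖b y‖ ∂μ ≤ ∫ y, ‖b y‖ * φ y ^ 2 ∂μ :=
        setIntegral_norm_le_integral_norm_mul_of_eqOn_one hb (hφ.continuous.pow 2)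
          (hφc.comp_left (g := (· ^ 2)) (zero_pow two_ne_zero)) (fun _ ↦ sq_nonneg _)
          measurableSet_ball hφ1
    _ ≤ δ * (∫ y, ‖fderiv ℝ φ y‖ ^ 2 ∂μ) ^ (1/2 : ℝ) * (∫ y, φ y ^ 2 ∂μ) ^ (1/2 : ℝ) :=
        hform φ hφ hφc
    _ = _ := by
        rw [integral_norm_fderiv_sq_comp_inv_smul_sub μ (hψ.differentiable (by simp)) x hr.le,
          integral_comp_inv_smul_sub μ (ψ · ^ 2) x hr.le, smul_eq_mul, mul_assoc δ, hscale]
        ring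

end FormBounded

/-- A multiplicatively form-bounded vector field (with constant `δ`) belongs to the Morrey
class `M₁`: there is a finite constant `C`, depending only on `d` and `δ`, with
`∫_{B_r(x)} |b| ≤ C r^{d-1}` for all `r > 0` and `x`. -/
theorem multiplicative_form_bounded_implies_morrey_M1 (d : ℕ) (hd : 1 ≤ d) (δ : ℝ) :
    ∃ C : ℝ,
      ∀ b : EuclideanSpace ℝ (Fin d) → EuclideanSpace ℝ (Fin d),
        LocallyIntegrable b volume →
        (∀ φ : EuclideanSpace ℝ (Fin d) → ℝ, ContDiff ℝ (⊤ : ℕ∞) φ → HasCompactSupport φ →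
          ∫ y, ‖b y‖ * φ y ^ 2 ≤
            δ * (∫ y, ‖fderiv ℝ φ y‖ ^ 2) ^ (1/2 : ℝ) * (∫ y, φ y ^ 2) ^ (1/2 : ℝ)) →
        ∀ r : ℝ, 0 < r → ∀ x : EuclideanSpace ℝ (Fin d),
          ∫ y in Metric.ball x r, ‖b y‖ ≤ C * r ^ (d - 1) := by
  let ψ : ContDiffBump (0 : EuclideanSpace ℝ (Fin d)) := ⟨1, 2, one_pos, one_lt_two⟩
  refine ⟨δ * (∫ y, ‖fderiv ℝ ψ y‖ ^ 2) ^ (1/2 : ℝ) * (∫ y, ψ y ^ 2) ^ (1/2 : ℝ),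
    fun b hb hform r hr x ↦ ?_⟩
  have hψ1 : Set.EqOn ψ 1 (ball 0 1) := fun _ hy ↦
    ψ.one_of_mem_closedBall (ball_subset_closedBall hy)
  simpa only [finrank_euclideanSpace_fin] using
    MultiplicativelyFormBounded.setIntegral_ball_le hform hb ψ.contDiff ψ.hasCompactSupport hψ1
      (by rwa [finrank_euclideanSpace_fin]) hr x
end

section
/- Let d ≥ 1, R > 0 and r > 0. There exist constants c ∈ (0,1] and C > 0, depending only on d, r and R, such that for every g ∈ C_c^∞(ℝ^d) with support contained in the ball B_R(0), every index 1 ≤ i ≤ d, every μ ≥ 1 and every x ∈ ℝ^d: (1 + |x|^r) · | ∫_0^∞ ∫_{ℝ^d} μ e^{−μ s} (4π s)^{−d/2} e^{−|x−y|²/(4s)} (∂_i g)(y) dy ds | ≤ C ∫_0^∞ ∫_{ℝ^d} μ e^{−c μ s} (4π s)^{−d/2} e^{−|x−y|²/(4s)} |(∂_i g)(y)| dy ds. -/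
/-!
Since `u ^ r ≤ (2r)^r e^{u/2}`, for `‖y‖ ≤ R` the weight `1 + ‖x‖ ^ r` is at most
`M e^{‖x - y‖/2}` with `M = 1 + (2r)^r e^{R/2}`. Moreover
`‖z‖/2 ≤ μs/2 + ‖z‖²/(8s)` (AM-GM, using `μ ≥ 1`), so the factor `e^{-μs} G_s(z)` of the heat kernel
absorbs `e^{‖z‖/2}` at the price of passing to `2^{d/2} e^{-μs/2} G_{2s}(z)`. Integrating against
`|∂_i g|` and substituting `s ↦ 2s` in the time integral gives the bound with `c = 1/4` and
`C = M 2^{d/2} / 2`.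
-/

open MeasureTheory Real Set Module

noncomputable section

lemma rpow_le_mul_exp_half {r u : ℝ} (hr : 0 < r) (hu : 0 ≤ u) :
    u ^ r ≤ (2 * r) ^ r * exp (u / 2) := by
  have hv : u / (2 * r) ≤ exp (u / (2 * r)) := by
    linarith [add_one_le_exp (u / (2 * r))]
  calc u ^ r = (2 * r) ^ r * (u / (2 * r)) ^ r := by
        rw [div_rpow hu (by positivity), mul_div_cancel₀ _ (by positivity)]
    _ ≤ (2 * r) ^ r * exp (u / (2 * r)) ^ r := by gcongr
    _ = (2 * r) ^ r * exp (u / 2) := by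
        rw [← exp_mul]; congr 2; field_simp

lemma one_add_norm_rpow_le {E : Type*} [SeminormedAddCommGroup E] {r R : ℝ} (hr : 0 < r)
    {x y : E} (hy : ‖y‖ ≤ R) :
    1 + ‖x‖ ^ r ≤ (1 + (2 * r) ^ r * exp (R / 2)) * exp (‖x - y‖ / 2) := by
  have hxy : ‖x‖ ≤ ‖x - y‖ + R := by
    linarith [norm_le_norm_sub_add x y]
  calc 1 + ‖x‖ ^ r ≤ exp (‖x - y‖ / 2) + (2 * r) ^ r * exp ((‖x - y‖ + R) / 2) := by
        gcongr
        · exact one_le_exp (by positivity)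
        · exact (rpow_le_rpow (norm_nonneg x) hxy hr.le).trans
            (rpow_le_mul_exp_half hr ((norm_nonneg _).trans hxy))
    _ = (1 + (2 * r) ^ r * exp (R / 2)) * exp (‖x - y‖ / 2) := by
        rw [add_div, exp_add]; ring

section HeatKernel

variable {V : Type*} [NormedAddCommGroup V]

def heatKernel (d : ℕ) (s : ℝ) (z : V) : ℝ :=
  (4 * π * s) ^ (-(d : ℝ) / 2) * exp (-‖z‖ ^ 2 / (4 * s))

lemma heatKernel_nonneg (d : ℕ) {s : ℝ} (hs : 0 ≤ s) (z : V) : 0 ≤ heatKernel d s z := by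
  unfold heatKernel; positivity

lemma heatKernel_two_mul (d : ℕ) {s : ℝ} (hs : 0 ≤ s) (z : V) :
    heatKernel d (2 * s) z =
      2 ^ (-(d : ℝ) / 2) * (4 * π * s) ^ (-(d : ℝ) / 2) * exp (-‖z‖ ^ 2 / (8 * s)) := by
  rw [heatKernel, show 4 * π * (2 * s) = 2 * (4 * π * s) by ring,
    mul_rpow (by norm_num) (by positivity)]
  ring_nf

lemma exp_mul_heatKernel_le (d : ℕ) {μ s : ℝ} (hμ : 1 ≤ μ) (hs : 0 < s) (z : V) :
    exp (‖z‖ / 2) * (exp (-μ * s) * heatKernel d s z) ≤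
      2 ^ ((d : ℝ) / 2) * (exp (-(1 / 4 * μ) * (2 * s)) * heatKernel d (2 * s) z) := by
  have hexp : ‖z‖ / 2 + -μ * s + -‖z‖ ^ 2 / (4 * s) ≤
      -(1 / 4 * μ) * (2 * s) + -‖z‖ ^ 2 / (8 * s) := by
    have hgap : -(1 / 4 * μ) * (2 * s) + -‖z‖ ^ 2 / (8 * s) -
        (‖z‖ / 2 + -μ * s + -‖z‖ ^ 2 / (4 * s)) =
          (4 * μ * s ^ 2 + ‖z‖ ^ 2 - 4 * s * ‖z‖) / (8 * s) := by
      field_simp; ring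
    have : 0 ≤ (4 * μ * s ^ 2 + ‖z‖ ^ 2 - 4 * s * ‖z‖) / (8 * s) := by
      apply div_nonneg _ (by positivity)
      nlinarith [sq_nonneg (‖z‖ - 2 * s), mul_nonneg (sub_nonneg.2 hμ) (sq_nonneg s)]
    linarith
  have h22 : (2 : ℝ) ^ ((d : ℝ) / 2) * 2 ^ (-(d : ℝ) / 2) = 1 := by
    rw [← rpow_add two_pos, neg_div, add_neg_cancel, rpow_zero]
  calc exp (‖z‖ / 2) * (exp (-μ * s) * heatKernel d s z)
      = (4 * π * s) ^ (-(d : ℝ) / 2) * exp (‖z‖ / 2 + -μ * s + -‖z‖ ^ 2 / (4 * s)) := by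
        rw [heatKernel, exp_add, exp_add]; ring
    _ ≤ (4 * π * s) ^ (-(d : ℝ) / 2) * exp (-(1 / 4 * μ) * (2 * s) + -‖z‖ ^ 2 / (8 * s)) := by
        gcongr
    _ = 2 ^ ((d : ℝ) / 2) * (exp (-(1 / 4 * μ) * (2 * s)) * heatKernel d (2 * s) z) := by
        rw [heatKernel_two_mul d hs.le, exp_add]
        linear_combination (-(4 * π * s) ^ (-(d : ℝ) / 2) * exp (-(1 / 4 * μ) * (2 * s)) *
          exp (-‖z‖ ^ 2 / (8 * s))) * h22

lemma weight_mul_exp_mul_heatKernel_le (d : ℕ) {r R μ s : ℝ} (hr : 0 < r) (hμ : 1 ≤ μ)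
    (hs : 0 < s) (x : V) {y : V} (hy : ‖y‖ ≤ R) :
    (1 + ‖x‖ ^ r) * (exp (-μ * s) * heatKernel d s (x - y)) ≤
      (1 + (2 * r) ^ r * exp (R / 2)) * 2 ^ ((d : ℝ) / 2) *
        (exp (-(1 / 4 * μ) * (2 * s)) * heatKernel d (2 * s) (x - y)) := by
  calc (1 + ‖x‖ ^ r) * (exp (-μ * s) * heatKernel d s (x - y))
      ≤ (1 + (2 * r) ^ r * exp (R / 2)) * exp (‖x - y‖ / 2) *
          (exp (-μ * s) * heatKernel d s (x - y)) :=
        mul_le_mul_of_nonneg_right (one_add_norm_rpow_le hr hy)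
          (mul_nonneg (exp_pos _).le (heatKernel_nonneg d hs.le _))
    _ = (1 + (2 * r) ^ r * exp (R / 2)) *
          (exp (‖x - y‖ / 2) * (exp (-μ * s) * heatKernel d s (x - y))) := mul_assoc _ _ _
    _ ≤ (1 + (2 * r) ^ r * exp (R / 2)) *
          (2 ^ ((d : ℝ) / 2) * (exp (-(1 / 4 * μ) * (2 * s)) * heatKernel d (2 * s) (x - y))) :=
        mul_le_mul_of_nonneg_left (exp_mul_heatKernel_le d hμ hs (x - y)) (by positivity)
    _ = _ := by ring

end HeatKernel

section HeatSemigroup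

variable {V : Type*} [NormedAddCommGroup V] [InnerProductSpace ℝ V] [FiniteDimensional ℝ V]
  [MeasurableSpace V] [BorelSpace V]

def heatSemigroup (d : ℕ) (s : ℝ) (h : V → ℝ) (x : V) : ℝ :=
  ∫ y, heatKernel d s (x - y) * h y

/-- `heatResolvent d μ ν h x` is `μ (ν - Δ)⁻¹ h (x)`. -/
def heatResolvent (d : ℕ) (μ ν : ℝ) (h : V → ℝ) (x : V) : ℝ :=
  ∫ s in Ioi 0, μ * exp (-ν * s) * heatSemigroup d s h x

lemma integral_heat_integrand_eq (d : ℕ) (μ ν s : ℝ) (h : V → ℝ) (x : V) :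
    ∫ y, μ * exp (-ν * s) * (4 * π * s) ^ (-(d : ℝ) / 2) * exp (-‖x - y‖ ^ 2 / (4 * s)) * h y =
      μ * exp (-ν * s) * heatSemigroup d s h x := by
  rw [heatSemigroup, ← integral_const_mul]; congr with y; rw [heatKernel]; ring

lemma integral_exp_neg_norm_sub_sq_div {s : ℝ} (hs : 0 < s) (x : V) :
    ∫ y, exp (-‖x - y‖ ^ 2 / (4 * s)) = (4 * π * s) ^ ((finrank ℝ V : ℝ) / 2) := by
  have hb : 0 < 1 / (4 * s) := by positivity
  have hshift : ∀ y, exp (-‖x - y‖ ^ 2 / (4 * s)) = exp (-(1 / (4 * s)) * ‖y - x‖ ^ 2) := by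
    intro y; rw [norm_sub_rev]; ring_nf
  simp_rw [hshift]
  rw [integral_sub_right_eq_self (fun z => exp (-(1 / (4 * s)) * ‖z‖ ^ 2)) x,
    GaussianFourier.integral_rexp_neg_mul_sq_norm hb]
  congr 1
  field_simp

lemma integral_heatKernel {s : ℝ} (hs : 0 < s) (x : V) :
    ∫ y, heatKernel (finrank ℝ V) s (x - y) = 1 := by
  simp only [heatKernel]
  rw [integral_const_mul, integral_exp_neg_norm_sub_sq_div hs, ← rpow_add (by positivity),
    neg_div, neg_add_cancel, rpow_zero]

lemma integrable_heatKernel (d : ℕ) {s : ℝ} (hs : 0 < s) (x : V) :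
    Integrable fun y => heatKernel d s (x - y) := by
  refine (Integrable.of_integral_ne_zero ?_).const_mul ((4 * π * s) ^ (-(d : ℝ) / 2))
  rw [integral_exp_neg_norm_sub_sq_div hs]
  positivity

lemma integrable_heatKernel_mul (d : ℕ) {s K : ℝ} (hs : 0 < s) (x : V) {h : V → ℝ}
    (hh : AEStronglyMeasurable h) (hK : ∀ y, |h y| ≤ K) :
    Integrable fun y => heatKernel d s (x - y) * h y :=
  (integrable_heatKernel d hs x).mul_bdd hh (Filter.Eventually.of_forall hK)

lemma abs_heatSemigroup_le {s K : ℝ} (hs : 0 < s) (x : V) {h : V → ℝ}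
    (hK : ∀ y, |h y| ≤ K) :
    |heatSemigroup (finrank ℝ V) s h x| ≤ K := by
  calc |heatSemigroup (finrank ℝ V) s h x|
      ≤ ∫ y, heatKernel (finrank ℝ V) s (x - y) * K := by
        rw [← Real.norm_eq_abs]
        refine norm_integral_le_of_norm_le ((integrable_heatKernel _ hs x).mul_const K)
          (Filter.Eventually.of_forall fun y => ?_)
        rw [norm_mul, Real.norm_of_nonneg (heatKernel_nonneg _ hs.le _)]
        exact mul_le_mul_of_nonneg_left (hK y) (heatKernel_nonneg _ hs.le _)
    _ = K := by rw [integral_mul_const, integral_heatKernel hs, one_mul]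

lemma measurable_heatSemigroup (d : ℕ) {h : V → ℝ} (hh : Measurable h) (x : V) :
    Measurable fun s => heatSemigroup d s h x := by
  have : Measurable (Function.uncurry fun s (y : V) => heatKernel d s (x - y) * h y) := by
    unfold heatKernel; fun_prop
  exact (StronglyMeasurable.integral_prod_right (E := ℝ) (ν := (volume : Measure V))
    this.stronglyMeasurable).measurable

lemma integrableOn_heatResolvent_integrand (μ : ℝ) {ν K : ℝ} (hν : 0 < ν) (x : V)
    {h : V → ℝ} (hh : Measurable h) (hK : ∀ y, |h y| ≤ K) :
    IntegrableOn (fun s => μ * exp (-ν * s) * heatSemigroup (finrank ℝ V) s h x) (Ioi 0) := by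
  refine ((exp_neg_integrableOn_Ioi 0 hν).const_mul μ).mul_bdd (c := K)
    (measurable_heatSemigroup _ hh x).aestronglyMeasurable ?_
  filter_upwards [ae_restrict_mem measurableSet_Ioi] with s hs
  exact abs_heatSemigroup_le hs x hK

lemma weight_mul_exp_mul_abs_heatSemigroup_le (d : ℕ) {r R μ s K : ℝ} (hr : 0 < r)
    (hμ : 1 ≤ μ) (hs : 0 < s) (x : V) {h : V → ℝ} (hh : AEStronglyMeasurable h)
    (hK : ∀ y, |h y| ≤ K) (hR : Function.support h ⊆ Metric.closedBall 0 R) :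
    (1 + ‖x‖ ^ r) * (exp (-μ * s) * |heatSemigroup d s h x|) ≤
      (1 + (2 * r) ^ r * exp (R / 2)) * 2 ^ ((d : ℝ) / 2) *
        (exp (-(1 / 4 * μ) * (2 * s)) * heatSemigroup d (2 * s) (fun y => |h y|) x) := by
  set M := 1 + (2 * r) ^ r * exp (R / 2)
  have hk : ∀ t > 0, ∀ y, 0 ≤ heatKernel d t (x - y) := fun t ht y => heatKernel_nonneg d ht.le _
  calc (1 + ‖x‖ ^ r) * (exp (-μ * s) * |heatSemigroup d s h x|)
      ≤ (1 + ‖x‖ ^ r) * exp (-μ * s) * ∫ y, heatKernel d s (x - y) * |h y| := by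
        rw [← mul_assoc]
        gcongr
        refine (abs_integral_le_integral_abs).trans_eq (integral_congr_ae ?_)
        filter_upwards with y
        rw [abs_mul, abs_of_nonneg (hk s hs y)]
    _ = ∫ y, (1 + ‖x‖ ^ r) * (exp (-μ * s) * heatKernel d s (x - y)) * |h y| := by
        rw [← integral_const_mul]; congr with y; ring
    _ ≤ ∫ y, M * 2 ^ ((d : ℝ) / 2) *
          (exp (-(1 / 4 * μ) * (2 * s)) * heatKernel d (2 * s) (x - y)) * |h y| := by
        refine integral_mono_of_nonneg (Filter.Eventually.of_forall fun y => ?_) ?_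
          (Filter.Eventually.of_forall fun y => ?_)
        · have := hk s hs y; positivity
        · have hint := integrable_heatKernel_mul d (by positivity : (0 : ℝ) < 2 * s) x hh.norm
            (fun y => by simpa using hK y)
          simpa only [Real.norm_eq_abs, mul_assoc] using
            hint.const_mul (M * 2 ^ ((d : ℝ) / 2) * exp (-(1 / 4 * μ) * (2 * s)))
        · by_cases hy : h y = 0
          · simp [hy]
          · exact mul_le_mul_of_nonneg_right
              (weight_mul_exp_mul_heatKernel_le d hr hμ hs x (by simpa using hR hy)) (abs_nonneg _)
    _ = M * 2 ^ ((d : ℝ) / 2) *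
          (exp (-(1 / 4 * μ) * (2 * s)) * heatSemigroup d (2 * s) (fun y => |h y|) x) := by
        rw [heatSemigroup, ← integral_const_mul, ← integral_const_mul]; congr with y; ring

lemma weight_mul_abs_heatResolvent_le {r R μ K : ℝ} (hr : 0 < r) (hμ : 1 ≤ μ) (x : V)
    {h : V → ℝ} (hh : Measurable h) (hK : ∀ y, |h y| ≤ K)
    (hR : Function.support h ⊆ Metric.closedBall 0 R) :
    (1 + ‖x‖ ^ r) * |heatResolvent (finrank ℝ V) μ μ h x| ≤
      (1 + (2 * r) ^ r * exp (R / 2)) * 2 ^ ((finrank ℝ V : ℝ) / 2) / 2 *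
        heatResolvent (finrank ℝ V) μ (1 / 4 * μ) (fun y => |h y|) x := by
  set n := finrank ℝ V
  set M := 1 + (2 * r) ^ r * exp (R / 2)
  set F := fun t => μ * exp (-(1 / 4 * μ) * t) * heatSemigroup n t (fun y => |h y|) x
  have hF : IntegrableOn (fun s => F (2 * s)) (Ioi 0) := by
    rw [integrableOn_Ioi_comp_mul_left_iff F 0 two_pos, mul_zero]
    exact integrableOn_heatResolvent_integrand μ (by positivity) x hh.abs
      (fun y => by rw [abs_abs]; exact hK y)
  calc (1 + ‖x‖ ^ r) * |heatResolvent n μ μ h x|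
      ≤ (1 + ‖x‖ ^ r) * ∫ s in Ioi 0, μ * (exp (-μ * s) * |heatSemigroup n s h x|) := by
        gcongr
        refine (abs_integral_le_integral_abs).trans_eq (integral_congr_ae ?_)
        filter_upwards with s
        rw [abs_mul, abs_mul, abs_of_nonneg (by positivity : 0 ≤ μ), abs_of_pos (exp_pos _),
          mul_assoc]
    _ = ∫ s in Ioi 0, μ * ((1 + ‖x‖ ^ r) * (exp (-μ * s) * |heatSemigroup n s h x|)) := by
        rw [← integral_const_mul]; congr with s; ring
    _ ≤ ∫ s in Ioi 0, M * 2 ^ ((n : ℝ) / 2) * F (2 * s) := by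
        refine integral_mono_of_nonneg (Filter.Eventually.of_forall fun s => by positivity)
          (hF.const_mul _) ?_
        filter_upwards [ae_restrict_mem measurableSet_Ioi] with s hs
        calc μ * ((1 + ‖x‖ ^ r) * (exp (-μ * s) * |heatSemigroup n s h x|))
            ≤ μ * (M * 2 ^ ((n : ℝ) / 2) * (exp (-(1 / 4 * μ) * (2 * s)) *
                heatSemigroup n (2 * s) (fun y => |h y|) x)) :=
              mul_le_mul_of_nonneg_left (weight_mul_exp_mul_abs_heatSemigroup_le n hr hμ hs x
                hh.aestronglyMeasurable hK hR) (by positivity)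
          _ = M * 2 ^ ((n : ℝ) / 2) * F (2 * s) := by ring
    _ = M * 2 ^ ((n : ℝ) / 2) / 2 * heatResolvent n μ (1 / 4 * μ) (fun y => |h y|) x := by
        rw [integral_const_mul, integral_comp_mul_left_Ioi F 0 two_pos, mul_zero, smul_eq_mul,
          heatResolvent]
        ring

end HeatSemigroup

theorem heat_kernel_resolvent_weighted_bound_general
    (d : ℕ) (R r : ℝ) (hr : 0 < r) :
    ∃ c C : ℝ, c ∈ Set.Ioc (0 : ℝ) 1 ∧ 0 < C ∧
      ∀ g : EuclideanSpace ℝ (Fin d) → ℝ,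
        ContDiff ℝ (⊤ : ℕ∞) g → HasCompactSupport g →
        tsupport g ⊆ Metric.ball (0 : EuclideanSpace ℝ (Fin d)) R →
        ∀ i : Fin d, ∀ μ : ℝ, 1 ≤ μ → ∀ x : EuclideanSpace ℝ (Fin d),
          (1 + ‖x‖ ^ r) *
            |∫ s in Set.Ioi (0 : ℝ), ∫ y : EuclideanSpace ℝ (Fin d),
                μ * Real.exp (-μ * s) * (4 * Real.pi * s) ^ (-(d : ℝ) / 2) *
                  Real.exp (-‖x - y‖ ^ 2 / (4 * s)) *
                  fderiv ℝ g y (EuclideanSpace.single i 1)|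
          ≤ C * ∫ s in Set.Ioi (0 : ℝ), ∫ y : EuclideanSpace ℝ (Fin d),
                μ * Real.exp (-(c * μ) * s) * (4 * Real.pi * s) ^ (-(d : ℝ) / 2) *
                  Real.exp (-‖x - y‖ ^ 2 / (4 * s)) *
                  |fderiv ℝ g y (EuclideanSpace.single i 1)| := by
  refine ⟨1 / 4, (1 + (2 * r) ^ r * exp (R / 2)) * 2 ^ ((d : ℝ) / 2) / 2,
    ⟨by norm_num, by norm_num⟩, by positivity, fun g hg hgc hgR i μ hμ x => ?_⟩
  set f := fun y => fderiv ℝ g y (EuclideanSpace.single i 1)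
  have hf : Continuous f := (hg.continuous_fderiv (by simp)).clm_apply continuous_const
  have hfR : Function.support f ⊆ Metric.closedBall 0 R :=
    (subset_tsupport _).trans <|
      (tsupport_fderiv_apply_subset ℝ _).trans (hgR.trans Metric.ball_subset_closedBall)
  obtain ⟨K, hK⟩ :=
    (hgc.fderiv_apply (𝕜 := ℝ) (EuclideanSpace.single i 1)).exists_bound_of_continuous hf
  simp only [integral_heat_integrand_eq]
  have hbound := weight_mul_abs_heatResolvent_le hr hμ x hf.measurable hK hfR
  rwa [finrank_euclideanSpace_fin] at hbound

/-- Weighted pointwise bound on the resolvent of the Laplacian applied to a derivative of a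
compactly supported smooth function, written via the heat kernel:
`(1+|x|^r) |μ(μ-Δ)⁻¹ ∂_i g (x)| ≤ C μ (cμ-Δ)⁻¹ |∂_i g| (x)` for all `μ ≥ 1`. -/
theorem heat_kernel_resolvent_weighted_bound
    (d : ℕ) (hd : 1 ≤ d) (R r : ℝ) (hR : 0 < R) (hr : 0 < r) :
    ∃ c C : ℝ, c ∈ Set.Ioc (0 : ℝ) 1 ∧ 0 < C ∧
      ∀ g : EuclideanSpace ℝ (Fin d) → ℝ,
        ContDiff ℝ (⊤ : ℕ∞) g → HasCompactSupport g →
        tsupport g ⊆ Metric.ball (0 : EuclideanSpace ℝ (Fin d)) R →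
        ∀ i : Fin d, ∀ μ : ℝ, 1 ≤ μ → ∀ x : EuclideanSpace ℝ (Fin d),
          (1 + ‖x‖ ^ r) *
            |∫ s in Set.Ioi (0 : ℝ), ∫ y : EuclideanSpace ℝ (Fin d),
                μ * Real.exp (-μ * s) * (4 * Real.pi * s) ^ (-(d : ℝ) / 2) *
                  Real.exp (-‖x - y‖ ^ 2 / (4 * s)) *
                  fderiv ℝ g y (EuclideanSpace.single i 1)|
          ≤ C * ∫ s in Set.Ioi (0 : ℝ), ∫ y : EuclideanSpace ℝ (Fin d),
                μ * Real.exp (-(c * μ) * s) * (4 * Real.pi * s) ^ (-(d : ℝ) / 2) *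
                  Real.exp (-‖x - y‖ ^ 2 / (4 * s)) *
                  |fderiv ℝ g y (EuclideanSpace.single i 1)| :=
  heat_kernel_resolvent_weighted_bound_general d R r hr

end
end
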